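/- Let A be a noetherian ring complete with respect to an ideal I, S a profinite set, and J ⊆ A an open ideal (i.e., J contains some power of I). Then C(S,A)/J·C(S,A) is isomorphic as a ring to LC(S, A/J), the ring of locally constant functions S → A/J. -/

import Mathlib

/-!
Since `J` is open, reduction mod `J` maps `C(S, A)` onto `LC(S, A/J)`, with kernel the
functions with values in `J`; the point is that such a function `f` lies in `J·C(S, A)`.
Write `J = (j₁, …, jₖ)` and let `c` be an Artin–Rees constant, `I^(n+c) ∩ J ⊆ I^n J`. If `f`
has values in `I^m J`, it agrees modulo `I^(m+1+c)` with a locally constant function with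
values in `I^m J`, whose coefficients in the `jᵢ` can be chosen locally constant with values
in `I^m`; the error then lies in `I^(m+1+c) ∩ J ⊆ I^(m+1) J`. Iterating, the partial sums of
the coefficients converge `I`-adically uniformly on `S`, hence to continuous functions, and
since `A` is `I`-adically Hausdorff, `f` is the combination of the `jᵢ` with these limits as
coefficients.
-/

open Topology Filter

theorem Submodule.exists_fun_of_mem_ideal_smul_span_range {R M ι : Type*} [CommSemiring R]
    [AddCommMonoid M] [Module R M] [Fintype ι] (I : Ideal R) (f : ι → M) {x : M}
    (hx : x ∈ I • span R (Set.range f)) :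
    ∃ a : ι → R, (∀ i, a i ∈ I) ∧ ∑ i, a i • f i = x := by
  obtain ⟨a, ha, rfl⟩ := (mem_ideal_smul_span_iff_exists_sum I f x).mp hx
  exact ⟨a, ha, (Finsupp.sum_fintype a (fun i c => c • f i) fun i => zero_smul R (f i)).symm⟩

section Adic

variable {A : Type*} [CommRing A] {I : Ideal A}

theorem Ideal.exists_pow_add_inf_le_pow_mul [IsNoetherianRing A] (I J : Ideal A) :
    ∃ c, ∀ n, I ^ (n + c) ⊓ J ≤ I ^ n * J := by
  obtain ⟨c, hc⟩ := Ideal.exists_pow_inf_eq_pow_smul I (J : Submodule A A)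
  refine ⟨c, fun n => ?_⟩
  have h := hc (n + c) (Nat.le_add_left c n)
  simp only [Ideal.smul_eq_mul, Ideal.mul_top, Nat.add_sub_cancel] at h
  calc I ^ (n + c) ⊓ J = I ^ n * (I ^ c ⊓ J) := h
    _ ≤ I ^ n * J := Ideal.mul_mono_right inf_le_right

theorem IsPrecomplete.exists_sub_mem_pow [IsPrecomplete I A] {x : ℕ → A}
    (hx : ∀ m n, m ≤ n → x n - x m ∈ I ^ m) : ∃ L, ∀ n, L - x n ∈ I ^ n := by
  obtain ⟨L, hL⟩ := IsPrecomplete.prec ‹_› (f := x) fun {m n} hmn => by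
    rw [SModEq.sub_mem, Ideal.smul_eq_mul, Ideal.mul_top, ← neg_sub]
    exact neg_mem (hx m n hmn)
  refine ⟨L, fun n => ?_⟩
  have := (hL n).symm
  rwa [SModEq.sub_mem, Ideal.smul_eq_mul, Ideal.mul_top] at this

theorem IsHausdorff.eq_of_forall_sub_mem_pow [IsHausdorff I A] {x y : A}
    (h : ∀ n, x - y ∈ I ^ n) : x = y :=
  (IsHausdorff.eq_iff_smodEq (I := I)).mpr fun n => by
    rw [SModEq.sub_mem, Ideal.smul_eq_mul, Ideal.mul_top]
    exact h n

variable [TopologicalSpace A] [IsTopologicalRing A] {S : Type*} [TopologicalSpace S]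

theorem IsAdic.continuous_of_forall_sub_mem_pow (hA : IsAdic I) {g : S → A}
    (p : ℕ → C(S, A)) (hg : ∀ n s, g s - p n s ∈ I ^ n) : Continuous g := by
  refine continuous_iff_continuousAt.mpr fun s₀ => ?_
  rw [ContinuousAt, ← tendsto_sub_nhds_zero_iff]
  intro V hV
  obtain ⟨n, hn⟩ := (isAdic_iff.mp hA).2 V hV
  have hnear : {s | p n s - p n s₀ ∈ I ^ n} ∈ 𝓝 s₀ :=
    ((p n).continuous.sub continuous_const).continuousAt.preimage_mem_nhds
      (((isAdic_iff.mp hA).1 n).mem_nhds (by simp))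
  rw [mem_map]
  filter_upwards [hnear] with s hs
  refine hn (show g s - g s₀ ∈ I ^ n from ?_)
  have e : g s - g s₀ = (g s - p n s) - (g s₀ - p n s₀) + (p n s - p n s₀) := by ring
  rw [e]
  exact add_mem (sub_mem (hg n s) (hg n s₀)) hs

theorem ContinuousMap.exists_forall_sub_mem_pow_of_cauchy (hA : IsAdic I) [IsPrecomplete I A]
    (P : ℕ → C(S, A)) (hP : ∀ m n, m ≤ n → ∀ s, P n s - P m s ∈ I ^ m) :
    ∃ g : C(S, A), ∀ n s, g s - P n s ∈ I ^ n := by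
  choose g hg using fun s => IsPrecomplete.exists_sub_mem_pow fun m n h => hP m n h s
  exact ⟨⟨g, hA.continuous_of_forall_sub_mem_pow P fun n s => hg s n⟩, fun n s => hg s n⟩

end Adic

section OpenIdeal

variable {A : Type*} [CommRing A] [TopologicalSpace A] [IsTopologicalRing A]
variable {S : Type*} [TopologicalSpace S]

theorem Ideal.isLocallyConstant_quotient_mk_comp {J : Ideal A} (hJ : IsOpen (J : Set A))
    (f : C(S, A)) : IsLocallyConstant fun s => Ideal.Quotient.mk J (f s) :=
  have : DiscreteTopology (A ⧸ J) := QuotientAddGroup.discreteTopology hJ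
  (IsLocallyConstant.iff_continuous _).mpr
    ((QuotientRing.isOpenQuotientMap_mk J).continuous.comp f.continuous)

theorem exists_locallyConstant_sub_mem {N : Ideal A} (hN : IsOpen (N : Set A)) {K : Set A}
    (f : C(S, A)) (hf : ∀ s, f s ∈ K) :
    ∃ ℓ : LocallyConstant S A, ∀ s, ℓ s ∈ K ∧ f s - ℓ s ∈ N := by
  classical
  let σ : A ⧸ N → A := fun x =>
    if h : ∃ a ∈ K, Ideal.Quotient.mk N a = x then h.choose else 0
  have hσ : ∀ a ∈ K,
      σ (Ideal.Quotient.mk N a) ∈ K ∧ a - σ (Ideal.Quotient.mk N a) ∈ N := by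
    intro a ha
    have h : ∃ b ∈ K, Ideal.Quotient.mk N b = Ideal.Quotient.mk N a := ⟨a, ha, rfl⟩
    simp only [σ, dif_pos h]
    exact ⟨h.choose_spec.1, Ideal.Quotient.eq.mp h.choose_spec.2.symm⟩
  exact ⟨⟨fun s => σ (Ideal.Quotient.mk N (f s)),
    (Ideal.isLocallyConstant_quotient_mk_comp hN f).comp σ⟩, fun s => hσ (f s) (hf s)⟩

variable {ι : Type*} [Fintype ι]

theorem exists_sum_mul_sub_mem {N L : Ideal A} (hN : IsOpen (N : Set A)) (j : ι → A)
    (r : C(S, A)) (hr : ∀ s, r s ∈ L * Ideal.span (Set.range j)) :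
    ∃ u : ι → C(S, A), (∀ i s, u i s ∈ L) ∧ ∀ s, r s - ∑ i, u i s * j i ∈ N := by
  obtain ⟨ℓ, hℓ⟩ := exists_locallyConstant_sub_mem hN r hr
  have hcoeff : ∀ x ∈ L * Ideal.span (Set.range j),
      ∃ a : ι → A, (∀ i, a i ∈ L) ∧ ∑ i, a i * j i = x := fun x hx =>
    Submodule.exists_fun_of_mem_ideal_smul_span_range L j (Ideal.smul_eq_mul L _ ▸ hx)
  choose! a ha hsum using hcoeff
  refine ⟨fun i => ℓ.map (a · i), fun i s => ha _ (hℓ s).1 i, fun s => ?_⟩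
  simpa [hsum _ (hℓ s).1] using (hℓ s).2

theorem exists_cauchy_coeffs_of_forall_mem {I J : Ideal A} (hA : IsAdic I) (j : ι → A)
    (hj : Ideal.span (Set.range j) = J) {c : ℕ} (hc : ∀ n, I ^ (n + c) ⊓ J ≤ I ^ n * J)
    (f : C(S, A)) (hf : ∀ s, f s ∈ J) :
    ∃ P : ℕ → ι → C(S, A), (∀ n s, f s - ∑ i, P n i s * j i ∈ I ^ n * J) ∧
      ∀ m n, m ≤ n → ∀ i s, P n i s - P m i s ∈ I ^ m := by
  have step : ∀ m (P : ι → C(S, A)), (∀ s, f s - ∑ i, P i s * j i ∈ I ^ m * J) →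
      ∃ Q : ι → C(S, A), (∀ i s, Q i s - P i s ∈ I ^ m) ∧
        ∀ s, f s - ∑ i, Q i s * j i ∈ I ^ (m + 1) * J := by
    intro m P hP
    obtain ⟨u, hu, hN⟩ := exists_sum_mul_sub_mem ((isAdic_iff.mp hA).1 (m + 1 + c)) j
      (f - ∑ i, P i * algebraMap A C(S, A) (j i)) (by simpa [hj] using hP)
    refine ⟨P + u, fun i s => by simpa using hu i s, fun s => hc (m + 1) ⟨?_, ?_⟩⟩
    · simpa [add_mul, Finset.sum_add_distrib, sub_add_eq_sub_sub] using hN s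
    · exact sub_mem (hf s) (Ideal.sum_mem _ fun i _ =>
        Ideal.mul_mem_left _ _ (hj ▸ Ideal.subset_span ⟨i, rfl⟩))
  choose! Q hQ hQf using step
  let P : ℕ → ι → C(S, A) := fun n => Nat.rec 0 (fun m Pm => Q m Pm) n
  have hPf : ∀ n s, f s - ∑ i, P n i s * j i ∈ I ^ n * J := by
    intro n
    induction n with
    | zero => simpa [P] using hf
    | succ n ih => exact hQf n (P n) ih
  refine ⟨P, hPf, fun m n hmn => ?_⟩
  induction n, hmn using Nat.le_induction with
  | base => simp
  | succ n hmn ih =>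
    intro i s
    rw [← sub_add_sub_cancel]
    exact add_mem (Ideal.pow_le_pow_right hmn (hQ n (P n) (hPf n) i s)) (ih i s)

theorem ContinuousMap.mem_map_algebraMap_of_forall_mem [IsNoetherianRing A] {I : Ideal A}
    (hA : IsAdic I) [IsAdicComplete I A] {J : Ideal A} {f : C(S, A)} (hf : ∀ s, f s ∈ J) :
    f ∈ J.map (algebraMap A C(S, A)) := by
  obtain ⟨k, j, hj⟩ :=
    Submodule.fg_iff_exists_fin_generating_family.mp (IsNoetherian.noetherian J)
  obtain ⟨c, hc⟩ := I.exists_pow_add_inf_le_pow_mul J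
  obtain ⟨P, hPf, hP⟩ := exists_cauchy_coeffs_of_forall_mem hA j hj hc f hf
  choose g hg using fun i => ContinuousMap.exists_forall_sub_mem_pow_of_cauchy hA
    (fun n => P n i) fun m n hmn s => hP m n hmn i s
  have hfg : f = ∑ i, g i * algebraMap A C(S, A) (j i) := by
    ext s
    refine IsHausdorff.eq_of_forall_sub_mem_pow (I := I) fun n => ?_
    have e : f s - (∑ i, g i * algebraMap A C(S, A) (j i)) s =
        (f s - ∑ i, P n i s * j i) - ∑ i, (g i s - P n i s) * j i := by
      simp only [ContinuousMap.coe_sum, Finset.sum_apply, ContinuousMap.mul_apply,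
        algebraMap_apply, smul_eq_mul, mul_one, sub_mul, Finset.sum_sub_distrib]
      abel
    rw [e]
    exact sub_mem (Ideal.mul_le_left (hPf n s))
      (Ideal.sum_mem _ fun i _ => Ideal.mul_mem_right _ _ (hg i n s))
  rw [hfg]
  exact Ideal.sum_mem _ fun i _ => Ideal.mul_mem_left _ _
    (Ideal.mem_map_of_mem _ (hj ▸ Submodule.subset_span ⟨i, rfl⟩))

def ContinuousMap.toLocallyConstantQuotient {J : Ideal A} (hJ : IsOpen (J : Set A)) :
    C(S, A) →+* LocallyConstant S (A ⧸ J) where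
  toFun f := ⟨fun s => Ideal.Quotient.mk J (f s), J.isLocallyConstant_quotient_mk_comp hJ f⟩
  map_one' := by ext; simp
  map_mul' f g := by ext; simp
  map_zero' := by ext; simp
  map_add' f g := by ext; simp

variable {J : Ideal A} (hJ : IsOpen (J : Set A))

theorem ContinuousMap.mem_ker_toLocallyConstantQuotient {f : C(S, A)} :
    f ∈ RingHom.ker (toLocallyConstantQuotient (S := S) hJ) ↔ ∀ s, f s ∈ J := by
  simp [RingHom.mem_ker, LocallyConstant.ext_iff, toLocallyConstantQuotient,
    Ideal.Quotient.eq_zero_iff_mem]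

theorem ContinuousMap.toLocallyConstantQuotient_surjective :
    Function.Surjective (toLocallyConstantQuotient (S := S) hJ) := fun ℓ =>
  ⟨ℓ.map (Function.surjInv Ideal.Quotient.mk_surjective), by
    ext s
    simp [toLocallyConstantQuotient, Function.surjInv_eq]⟩

end OpenIdeal

theorem continuousMap_quotient_iso_locallyConstant
    (A : Type*) [CommRing A] [IsNoetherianRing A] [TopologicalSpace A] [IsTopologicalRing A]
    (I : Ideal A) (hA : IsAdic I) [IsAdicComplete I A]
    (S : Type*) [TopologicalSpace S]
    (J : Ideal A) (hJ : ∃ n : ℕ, I ^ n ≤ J) :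
    Nonempty ((C(S, A) ⧸ J.map (algebraMap A C(S, A))) ≃+* LocallyConstant S (A ⧸ J)) := by
  obtain ⟨n, hn⟩ := hJ
  have hJopen : IsOpen (J : Set A) := Submodule.isOpen_mono hn ((isAdic_iff.mp hA).1 n)
  have hker : RingHom.ker (ContinuousMap.toLocallyConstantQuotient (S := S) hJopen) =
      J.map (algebraMap A C(S, A)) := by
    refine le_antisymm (fun f hf => ContinuousMap.mem_map_algebraMap_of_forall_mem hA
      ((ContinuousMap.mem_ker_toLocallyConstantQuotient hJopen).mp hf)) ?_
    exact Ideal.map_le_iff_le_comap.mpr fun a ha =>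
      (ContinuousMap.mem_ker_toLocallyConstantQuotient hJopen).mpr fun _ => ha
  exact ⟨(Ideal.quotEquivOfEq hker.symm).trans (RingHom.quotientKerEquivOfSurjective
    (ContinuousMap.toLocallyConstantQuotient_surjective hJopen))⟩
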